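/- Define H : ℝ² → ℝ by H(a, b) = (1/2)·∫₀^{π/2} (max((√3/2)(a·cos φ + b·sin φ), 0))² · cos φ dφ. Then for all real numbers ṡ, ν̇ with ṡ > 0 and ṡ/2 ≤ ν̇ ≤ ṡ, the Legendre–Fenchel transform satisfies: sup over (a, b) ∈ ℝ² of (a·ṡ + b·ν̇ − H(a, b)) = 2·(ṡ² − 2·ṡ·ν̇ + 2·ν̇²). -/

import Mathlib

open Real

/-- The Hamiltonian of the convexity-constrained Euler–Mumford elastica model
(with `β = 1`) in reduced coordinates. -/
noncomputable def convexElasticaH (a b : ℝ) : ℝ :=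
  (1/2) * ∫ x in (0:ℝ)..(π/2),
    (max ((Real.sqrt 3 / 2) * (a * Real.cos x + b * Real.sin x)) 0)^2
      * Real.cos x

lemma integral_trig (c₁ c₂ c₃ : ℝ) :
    ∫ x in (0:ℝ)..(π/2),
      (c₁ * Real.cos x ^ 3 + c₂ * Real.sin x * Real.cos x ^ 2
        + c₃ * Real.sin x ^ 2 * Real.cos x)
      = c₁ * (2/3) + c₂ * (1/3) + c₃ * (1/3) := by
  have h : ∀ x ∈ Set.uIcc (0:ℝ) (π/2),
      HasDerivAt (fun y => c₁ * (Real.sin y - Real.sin y ^ 3 / 3)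
        + c₂ * (-(Real.cos y ^ 3) / 3) + c₃ * (Real.sin y ^ 3 / 3))
        (c₁ * Real.cos x ^ 3 + c₂ * Real.sin x * Real.cos x ^ 2
          + c₃ * Real.sin x ^ 2 * Real.cos x) x := by
    intro x _
    have hsin := Real.hasDerivAt_sin x
    have hcos := Real.hasDerivAt_cos x
    have H1 : HasDerivAt (fun y => Real.sin y - Real.sin y ^ 3 / 3)
        (Real.cos x - (3 * Real.sin x ^ 2 * Real.cos x) / 3) x := by
      exact hsin.sub (((hsin.pow 3)).div_const 3)
    have H2 : HasDerivAt (fun y => -(Real.cos y ^ 3) / 3)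
        (-(3 * Real.cos x ^ 2 * (-Real.sin x)) / 3) x := by
      exact ((hcos.pow 3).neg).div_const 3
    have H3 : HasDerivAt (fun y => Real.sin y ^ 3 / 3)
        ((3 * Real.sin x ^ 2 * Real.cos x) / 3) x := (hsin.pow 3).div_const 3
    have := ((H1.const_mul c₁).add (H2.const_mul c₂)).add (H3.const_mul c₃)
    refine this.congr_deriv ?_; symm
    have hpy := Real.sin_sq_add_cos_sq x
    linear_combination (c₁ * Real.cos x) * hpy
  rw [intervalIntegral.integral_eq_sub_of_hasDerivAt h ((by fun_prop : Continuous fun x : ℝ => c₁ * Real.cos x ^ 3 + c₂ * Real.sin x * Real.cos x ^ 2 + c₃ * Real.sin x ^ 2 * Real.cos x).intervalIntegrable 0 (π/2))]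
  simp [Real.sin_pi_div_two, Real.cos_pi_div_two]
  ring

lemma sqrt3_sq : Real.sqrt 3 ^ 2 = 3 := Real.sq_sqrt (by norm_num)

lemma convexElasticaH_eval (a b : ℝ) (ha : 0 ≤ a) (hb : 0 ≤ b) :
    convexElasticaH a b = a^2/4 + a*b/4 + b^2/8 := by
  unfold convexElasticaH
  rw [intervalIntegral.integral_congr
    (g := fun x => (3/4*a^2) * Real.cos x ^ 3 + (3/2*a*b) * Real.sin x * Real.cos x ^ 2
      + (3/4*b^2) * Real.sin x ^ 2 * Real.cos x) ?_]
  · rw [integral_trig]; ring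
  · intro x hx
    rw [Set.uIcc_of_le (by positivity)] at hx
    have hc : 0 ≤ Real.cos x := Real.cos_nonneg_of_mem_Icc
      ⟨by linarith [hx.1, Real.pi_pos], hx.2⟩
    have hsx : 0 ≤ Real.sin x := Real.sin_nonneg_of_nonneg_of_le_pi hx.1
      (by linarith [hx.2, Real.pi_pos])
    have hT : 0 ≤ (Real.sqrt 3 / 2) * (a * Real.cos x + b * Real.sin x) := by
      have := Real.sqrt_nonneg 3
      have := mul_nonneg ha hc
      have := mul_nonneg hb hsx
      positivity
    simp only
    rw [max_eq_left hT]
    have h3 := sqrt3_sq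
    linear_combination ((a * Real.cos x + b * Real.sin x)^2 * Real.cos x / 4) * h3

lemma convexElasticaH_lb (a b a₀ b₀ : ℝ) (ha₀ : 0 ≤ a₀) (hb₀ : 0 ≤ b₀) :
    (1/2) * ((3/4*(2*a₀*a - a₀^2)) * (2/3) + (3/4*(2*(a₀*b + b₀*a) - 2*a₀*b₀)) * (1/3)
      + (3/4*(2*b₀*b - b₀^2)) * (1/3)) ≤ convexElasticaH a b := by
  unfold convexElasticaH
  have key : ∫ x in (0:ℝ)..(π/2),
      ((3/4*(2*a₀*a - a₀^2)) * Real.cos x ^ 3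
        + (3/4*(2*(a₀*b + b₀*a) - 2*a₀*b₀)) * Real.sin x * Real.cos x ^ 2
        + (3/4*(2*b₀*b - b₀^2)) * Real.sin x ^ 2 * Real.cos x)
      ≤ ∫ x in (0:ℝ)..(π/2),
        (max ((Real.sqrt 3 / 2) * (a * Real.cos x + b * Real.sin x)) 0)^2
          * Real.cos x := by
    apply intervalIntegral.integral_mono_on (by positivity)
    · exact (by fun_prop : Continuous fun x : ℝ => (3/4*(2*a₀*a - a₀^2)) * Real.cos x ^ 3
        + (3/4*(2*(a₀*b + b₀*a) - 2*a₀*b₀)) * Real.sin x * Real.cos x ^ 2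
        + (3/4*(2*b₀*b - b₀^2)) * Real.sin x ^ 2 * Real.cos x).intervalIntegrable 0 (π/2)
    · exact (by fun_prop : Continuous fun x : ℝ =>
        (max ((Real.sqrt 3 / 2) * (a * Real.cos x + b * Real.sin x)) 0)^2
          * Real.cos x).intervalIntegrable 0 (π/2)
    · intro x hx
      have hc : 0 ≤ Real.cos x := Real.cos_nonneg_of_mem_Icc
        ⟨by linarith [hx.1, Real.pi_pos], hx.2⟩
      have hsx : 0 ≤ Real.sin x := Real.sin_nonneg_of_nonneg_of_le_pi hx.1
        (by linarith [hx.2, Real.pi_pos])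
      have hu : 0 ≤ a₀ * Real.cos x + b₀ * Real.sin x := by
        have := mul_nonneg ha₀ hc
        have := mul_nonneg hb₀ hsx
        linarith
      have h3 := sqrt3_sq
      rcases le_or_gt 0 (a * Real.cos x + b * Real.sin x) with hT | hT
      · rw [max_eq_left (by positivity)]
        have he : (Real.sqrt 3 / 2 * (a * Real.cos x + b * Real.sin x))^2 * Real.cos x
            = 3/4 * (a * Real.cos x + b * Real.sin x)^2 * Real.cos x := by
          linear_combination ((a * Real.cos x + b * Real.sin x)^2 * Real.cos x / 4) * h3
        rw [he]
        nlinarith [mul_nonneg hc (sq_nonneg ((a * Real.cos x + b * Real.sin x)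
          - (a₀ * Real.cos x + b₀ * Real.sin x)))]
      · rw [max_eq_right (by nlinarith [Real.sqrt_nonneg 3])]
        nlinarith [mul_nonneg hc (mul_nonneg hu (le_of_lt (neg_pos.mpr hT))),
          mul_nonneg hc (sq_nonneg (a₀ * Real.cos x + b₀ * Real.sin x))]
  rw [integral_trig] at key
  linarith

theorem stmt_13 (s v : ℝ) (hs : 0 < s) (h1 : s / 2 ≤ v) (h2 : v ≤ s) :
    IsLUB {w : ℝ | ∃ a b : ℝ, w = a * s + b * v - convexElasticaH a b}
      (2 * (s^2 - 2 * s * v + 2 * v^2)) := by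
  have ha₀ : (0:ℝ) ≤ 4 * (s - v) := by linarith
  have hb₀ : (0:ℝ) ≤ 8 * v - 4 * s := by linarith
  constructor
  · rintro w ⟨a, b, rfl⟩
    have := convexElasticaH_lb a b (4 * (s - v)) (8 * v - 4 * s) ha₀ hb₀
    nlinarith [this]
  · intro c hc
    apply hc
    refine ⟨4 * (s - v), 8 * v - 4 * s, ?_⟩
    rw [convexElasticaH_eval _ _ ha₀ hb₀]
    ring
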